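/- Let m ≥ 1 and f_m := D_{2^{2m+1}}^w − D_{2^{2m}}^w. Then the maximal function satisfies f_m* = |f_m| (pointwise), and for every 0 < p < ∞, ‖f_m*‖_{L_p(μ)} = 2^{2m(1−1/p)}. -/

import Mathlib

open MeasureTheory ENNReal

noncomputable section

/-- The Walsh group: countable product of copies of ℤ₂. -/
abbrev G : Type := ℕ → ZMod 2

instance : TopologicalSpace (ZMod 2) := ⊥
instance : DiscreteTopology (ZMod 2) := ⟨rfl⟩
instance : IsTopologicalAddGroup (ZMod 2) :=
  { continuous_add := continuous_of_discreteTopology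
    continuous_neg := continuous_of_discreteTopology }
instance : MeasurableSpace G := borel G
instance : BorelSpace G := ⟨rfl⟩

/-- The normalized Haar (= product) measure on `G`. -/
def μ : Measure G := Measure.addHaarMeasure (⊤ : TopologicalSpace.PositiveCompacts G)

/-- The `k`-th Rademacher function. -/
def rad (k : ℕ) (x : G) : ℝ := (-1 : ℝ) ^ (x k).val

/-- `|n| = ⌊log₂ n⌋`. -/
def lg (n : ℕ) : ℕ := Nat.log 2 n

/-- The Walsh–Paley functions. -/
def walsh (n : ℕ) (x : G) : ℝ :=
  ∏ k ∈ Finset.range (n + 1), rad k x ^ (n.testBit k).toNat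

/-- The Walsh–Kaczmarz functions. -/
def kacz (n : ℕ) (x : G) : ℝ :=
  if n = 0 then 1
  else rad (lg n) x *
    ∏ k ∈ Finset.range (lg n), rad (lg n - 1 - k) x ^ (n.testBit k).toNat

/-- Walsh–Paley Dirichlet kernel. -/
def DW (n : ℕ) (x : G) : ℝ := ∑ k ∈ Finset.range n, walsh k x

/-- Walsh–Kaczmarz Dirichlet kernel. -/
def DK (n : ℕ) (x : G) : ℝ := ∑ k ∈ Finset.range n, kacz k x

/-- Walsh–Paley Fejér kernel (with `KW 0 = 0`). -/
def KW (n : ℕ) (x : G) : ℝ := (∑ k ∈ Finset.range n, DW k x) / n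

/-- Walsh–Kaczmarz Fejér kernel. -/
def KK (n : ℕ) (x : G) : ℝ := (∑ k ∈ Finset.range n, DK k x) / n

/-- Reversal of the first `A` coordinates. -/
def tau (A : ℕ) (x : G) : G := fun k => if k < A then x (A - 1 - k) else x k

/-- Walsh–Fourier coefficients. -/
def coefW (f : G → ℝ) (i : ℕ) : ℝ := ∫ x, f x * walsh i x ∂μ

/-- Walsh–Kaczmarz–Fourier coefficients. -/
def coefK (f : G → ℝ) (i : ℕ) : ℝ := ∫ x, f x * kacz i x ∂μ

/-- Partial sums of the Walsh–Fourier series. -/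
def SW (f : G → ℝ) (M : ℕ) (x : G) : ℝ := ∑ i ∈ Finset.range M, coefW f i * walsh i x

/-- Partial sums of the Walsh–Kaczmarz–Fourier series. -/
def SK (f : G → ℝ) (M : ℕ) (x : G) : ℝ := ∑ i ∈ Finset.range M, coefK f i * kacz i x

/-- Fejér means of the Walsh–Kaczmarz–Fourier series. -/
def sigmaK (f : G → ℝ) (n : ℕ) (x : G) : ℝ := (∑ j ∈ Finset.range n, SK f j x) / n

/-- The dyadic martingale maximal function. -/
def fstar (f : G → ℝ) (x : G) : ℝ≥0∞ := ⨆ n : ℕ, ENNReal.ofReal |SW f (2 ^ n) x|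

/-- Dyadic interval of rank `n` around `x`. -/
def cyl (n : ℕ) (x : G) : Set G := {y : G | ∀ k < n, y k = x k}

/-- Dyadic interval `I_n` around `0`. -/
def In (n : ℕ) : Set G := cyl n 0

/-- `e t`: the element of `G` whose `t`-th coordinate is `1` and the rest are `0`. -/
def e (t : ℕ) : G := fun k => if k = t then 1 else 0

/-- `q_m = 2^{2m} + 2^{2m-2} + ⋯ + 2² + 2⁰`. -/
def qA (m : ℕ) : ℕ := ∑ i ∈ Finset.range (m + 1), 4 ^ i

/-- `f_m = D_{2^{2m+1}}^w − D_{2^{2m}}^w`. -/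
def fm (m : ℕ) (x : G) : ℝ := DW (2 ^ (2 * m + 1)) x - DW (2 ^ (2 * m)) x

/-- The weak `L^p` quasinorm `‖f‖_{L_{p,∞}} = sup_{λ>0} λ · μ{|f|>λ}^{1/p}`. -/
def wnorm (f : G → ℝ) (p : ℝ) : ℝ≥0∞ :=
  ⨆ (l : ℝ) (_ : 0 < l), ENNReal.ofReal l * μ {x : G | l < |f x|} ^ (1 / p)

/-- The set `J_N^{m,l}` (with `m : ℤ`, `-1 ≤ m ≤ l`). -/
def Jset (N l : ℕ) (m : ℤ) : Set G :=
  {x : G | (∀ j : ℕ, m < (j : ℤ) → j < l → x j = 0) ∧ x l = 1 ∧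
    (∀ j : ℕ, l < j → j < N → x j = 0) ∧ (0 ≤ m → x m.toNat = 1)}

/-! ### Auxiliary lemmas -/

lemma zmod2_cases (a : ZMod 2) : a = 0 ∨ a = 1 := by revert a; decide

@[simp] lemma zmod2_val_zero : ((0 : ZMod 2)).val = 0 := rfl
@[simp] lemma zmod2_val_one : ((1 : ZMod 2)).val = 1 := rfl
@[simp] lemma zmod2_val_two : ((2 : ZMod 2)).val = 0 := rfl
@[simp] lemma zmod2_one_add_one : (1 : ZMod 2) + 1 = 0 := by decide

instance : IsProbabilityMeasure μ := ⟨by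
  have := Measure.addHaarMeasure_self (K₀ := (⊤ : TopologicalSpace.PositiveCompacts G))
  rwa [TopologicalSpace.PositiveCompacts.coe_top] at this⟩

instance : μ.IsAddHaarMeasure := Measure.isAddHaarMeasure_addHaarMeasure _

lemma rad_cases (k : ℕ) (x : G) : rad k x = 1 ∨ rad k x = -1 := by
  rcases zmod2_cases (x k) with h | h <;> simp [rad, h]

lemma rad_sq (k : ℕ) (x : G) : rad k x * rad k x = 1 := by
  rcases rad_cases k x with h | h <;> rw [h] <;> norm_num

lemma continuous_rad (k : ℕ) : Continuous (rad k) := by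
  have h : rad k = (fun a : ZMod 2 => ((-1 : ℝ)) ^ a.val) ∘ (fun x : G => x k) := rfl
  rw [h]
  exact continuous_of_discreteTopology.comp (continuous_apply k)

lemma continuous_walsh (n : ℕ) : Continuous (walsh n) := by
  unfold walsh
  exact continuous_finset_prod _ fun k _ => (continuous_rad k).pow _

lemma integrable_walsh (n : ℕ) : Integrable (walsh n) μ :=
  (continuous_walsh n).integrable_of_hasCompactSupport (isClosed_tsupport _).isCompact

lemma nat_lt_two_pow_succ (n : ℕ) : n < 2 ^ (n + 1) :=
  lt_of_lt_of_le (Nat.lt_two_pow_self (n := n)) (Nat.pow_le_pow_right (by norm_num) (Nat.le_succ n))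

lemma walsh_eq_prod (n N : ℕ) (h : n < 2 ^ N) (x : G) :
    walsh n x = ∏ k ∈ Finset.range N, rad k x ^ (n.testBit k).toNat := by
  have key : ∀ M, M ≤ max (n + 1) N → n < 2 ^ M →
      (∏ k ∈ Finset.range M, rad k x ^ (n.testBit k).toNat)
      = ∏ k ∈ Finset.range (max (n + 1) N), rad k x ^ (n.testBit k).toNat := by
    intro M hle hM
    refine Finset.prod_subset (Finset.range_subset_range.2 hle) ?_
    intro j _ hj
    rw [Finset.mem_range, not_lt] at hj
    have : n.testBit j = false :=
      Nat.testBit_eq_false_of_lt (lt_of_lt_of_le hM (Nat.pow_le_pow_right (by norm_num) hj))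
    simp [this]
  rw [walsh, key (n + 1) (le_max_left _ _) (nat_lt_two_pow_succ n),
    key N (le_max_right _ _) h]

lemma walsh_mul (i j : ℕ) (x : G) : walsh i x * walsh j x = walsh (i ^^^ j) x := by
  set N := max i j + 1 with hN
  have hi : i < 2 ^ N := lt_of_le_of_lt (le_max_left i j) (nat_lt_two_pow_succ _)
  have hj : j < 2 ^ N := lt_of_le_of_lt (le_max_right i j) (nat_lt_two_pow_succ _)
  rw [walsh_eq_prod i N hi, walsh_eq_prod j N hj,
    walsh_eq_prod (i ^^^ j) N (Nat.xor_lt_two_pow hi hj), ← Finset.prod_mul_distrib]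
  refine Finset.prod_congr rfl fun k _ => ?_
  rw [Nat.testBit_xor]
  rcases Bool.eq_false_or_eq_true (i.testBit k) with h1 | h1 <;>
    rcases Bool.eq_false_or_eq_true (j.testBit k) with h2 | h2 <;>
      simp [h1, h2, rad_sq k x]

lemma walsh_zero_eq (x : G) : walsh 0 x = 1 := by simp [walsh]

lemma integral_walsh (n : ℕ) : ∫ x, walsh n x ∂μ = if n = 0 then 1 else 0 := by
  rcases eq_or_ne n 0 with h | h
  · simp [h, walsh_zero_eq]
  · simp only [h, if_false]
    obtain ⟨k, hk⟩ : ∃ k, n.testBit k = true := by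
      by_contra hcon
      push_neg at hcon
      exact h (Nat.zero_of_testBit_eq_false fun i => by simpa using hcon i)
    have hkn : k < n + 1 := by
      by_contra hcon
      push_neg at hcon
      have : n.testBit k = false :=
        Nat.testBit_eq_false_of_lt
          (lt_of_lt_of_le (nat_lt_two_pow_succ n) (Nat.pow_le_pow_right (by norm_num) hcon))
      simp [this] at hk
    have flip : ∀ x : G, walsh n (e k + x) = -walsh n x := by
      intro x
      have step : ∀ j ∈ Finset.range (n + 1),
          rad j (e k + x) ^ (n.testBit j).toNat
          = (if j = k then (-1 : ℝ) else 1) * rad j x ^ (n.testBit j).toNat := by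
        intro j _
        rcases eq_or_ne j k with rfl | hjk
        · have : rad j (e j + x) = -rad j x := by
            rcases zmod2_cases (x j) with h0 | h0 <;>
              simp [rad, e, Pi.add_apply, h0] <;> norm_num
          rw [this, hk]
          simp
        · have : rad j (e k + x) = rad j x := by
            simp [rad, e, Pi.add_apply, hjk]
          simp [this, hjk]
      rw [walsh, Finset.prod_congr rfl step, Finset.prod_mul_distrib,
        Finset.prod_ite_eq' (Finset.range (n + 1)) k (fun _ => (-1 : ℝ))]
      simp [Finset.mem_range.2 hkn, walsh]
    have hinv := integral_add_left_eq_self (μ := μ) (walsh n) (e k)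
    simp only [flip, integral_neg] at hinv
    linarith

lemma integral_walsh_mul_walsh (i j : ℕ) :
    ∫ x, walsh i x * walsh j x ∂μ = if i = j then 1 else 0 := by
  have : (fun x => walsh i x * walsh j x) = walsh (i ^^^ j) := funext fun x => walsh_mul i j x
  rw [this, integral_walsh]
  simp [xor_eq_zero_iff]

lemma fm_sum (m : ℕ) (x : G) :
    fm m x = ∑ k ∈ Finset.Ico (2 ^ (2 * m)) (2 ^ (2 * m + 1)), walsh k x := by
  rw [Finset.sum_Ico_eq_sub _ (Nat.pow_le_pow_right (by norm_num) (Nat.le_succ _))]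
  rfl

lemma coefW_fm (m i : ℕ) :
    coefW (fm m) i = if i ∈ Finset.Ico (2 ^ (2 * m)) (2 ^ (2 * m + 1)) then 1 else 0 := by
  have hfun : ∀ x : G, fm m x * walsh i x
      = ∑ k ∈ Finset.Ico (2 ^ (2 * m)) (2 ^ (2 * m + 1)), walsh (k ^^^ i) x := by
    intro x
    rw [fm_sum, Finset.sum_mul]
    exact Finset.sum_congr rfl fun k _ => walsh_mul k i x
  rw [coefW]
  simp only [hfun]
  rw [integral_finset_sum _ fun k _ => integrable_walsh (k ^^^ i)]
  have : ∀ k, (∫ x, walsh (k ^^^ i) x ∂μ) = if k = i then 1 else 0 := by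
    intro k
    rw [integral_walsh]
    simp [xor_eq_zero_iff]
  simp only [this]
  rw [Finset.sum_ite_eq' (Finset.Ico (2 ^ (2 * m)) (2 ^ (2 * m + 1))) i (fun _ => (1 : ℝ))]

lemma SW_fm_low (m n : ℕ) (hn : n ≤ 2 * m) (x : G) : SW (fm m) (2 ^ n) x = 0 := by
  rw [SW]
  refine Finset.sum_eq_zero fun i hi => ?_
  rw [Finset.mem_range] at hi
  have : i ∉ Finset.Ico (2 ^ (2 * m)) (2 ^ (2 * m + 1)) := by
    rw [Finset.mem_Ico]
    push_neg
    intro hle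
    exact absurd (lt_of_lt_of_le hi (Nat.pow_le_pow_right (by norm_num) hn)) (not_lt.2 hle)
  rw [coefW_fm, if_neg this, zero_mul]

lemma SW_fm_high (m n : ℕ) (hn : 2 * m + 1 ≤ n) (x : G) : SW (fm m) (2 ^ n) x = fm m x := by
  rw [SW, fm_sum]
  simp only [coefW_fm, ite_mul, one_mul, zero_mul]
  rw [← Finset.sum_subset (s₁ := Finset.Ico (2 ^ (2 * m)) (2 ^ (2 * m + 1)))
    (fun i hi => Finset.mem_range.2
      (lt_of_lt_of_le (Finset.mem_Ico.1 hi).2 (Nat.pow_le_pow_right (by norm_num) hn)))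
    (fun i _ hni => by rw [if_neg hni])]
  exact Finset.sum_congr rfl fun i hi => if_pos hi

lemma walsh_two_pow_add (n k : ℕ) (hk : k < 2 ^ n) (x : G) :
    walsh (2 ^ n + k) x = walsh k x * rad n x := by
  have hlt : 2 ^ n + k < 2 ^ (n + 1) := by
    rw [pow_succ, mul_two]
    omega
  rw [walsh_eq_prod _ (n + 1) hlt, Finset.prod_range_succ]
  have h1 : (2 ^ n + k).testBit n = true := by
    rw [Nat.testBit_two_pow_add_eq, Nat.testBit_eq_false_of_lt hk]
    rfl
  have h2 : ∀ j ∈ Finset.range n, rad j x ^ ((2 ^ n + k).testBit j).toNat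
      = rad j x ^ (k.testBit j).toNat := by
    intro j hj
    rw [Nat.testBit_two_pow_add_gt (Finset.mem_range.1 hj)]
  rw [h1, Finset.prod_congr rfl h2, ← walsh_eq_prod k n hk]
  simp

lemma DW_two_pow (n : ℕ) (x : G) :
    DW (2 ^ n) x = if (∀ j < n, x j = 0) then ((2 : ℝ) ^ n) else 0 := by
  induction n with
  | zero => simp [DW, walsh_zero_eq]
  | succ n ih =>
    have hsplit : DW (2 ^ (n + 1)) x = DW (2 ^ n) x * (1 + rad n x) := by
      rw [DW, pow_succ, mul_two, Finset.sum_range_add, ← DW]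
      have : ∀ j ∈ Finset.range (2 ^ n), walsh (2 ^ n + j) x = walsh j x * rad n x := by
        intro j hj
        exact walsh_two_pow_add n j (Finset.mem_range.1 hj) x
      rw [Finset.sum_congr rfl this, ← Finset.sum_mul, ← DW]
      ring
    rw [hsplit, ih]
    rcases zmod2_cases (x n) with h0 | h0
    · have hr : rad n x = 1 := by simp [rad, h0]
      by_cases hall : ∀ j < n, x j = 0
      · have hall' : ∀ j < n + 1, x j = 0 := by
          intro j hj
          rcases Nat.lt_succ_iff_lt_or_eq.1 hj with h | h
          · exact hall j h
          · rw [h]; exact h0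
        rw [if_pos hall, if_pos hall', hr]
        ring
      · have hall' : ¬∀ j < n + 1, x j = 0 := fun hc => hall fun j hj => hc j (Nat.lt_succ_of_lt hj)
        rw [if_neg hall, if_neg hall', zero_mul]
    · have hr : rad n x = -1 := by simp [rad, h0]
      have hall' : ¬∀ j < n + 1, x j = 0 := by
        intro hc
        have := hc n (Nat.lt_succ_self n)
        rw [h0] at this
        exact one_ne_zero this
      rw [if_neg hall', hr]
      ring

lemma mem_In_iff (n : ℕ) (x : G) : x ∈ In n ↔ ∀ k < n, x k = 0 := by
  simp [In, cyl]

lemma measurableSet_In (n : ℕ) : MeasurableSet (In n) := by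
  have : In n = ⋂ k ∈ Finset.range n, {x : G | x k = 0} := by
    ext x
    simp [mem_In_iff, Set.mem_iInter]
  rw [this]
  refine Finset.measurableSet_biInter _ fun k _ => ?_
  have hcl : IsClosed {x : G | x k = 0} :=
    IsClosed.preimage (continuous_apply k) (isClosed_discrete {0})
  exact hcl.measurableSet

lemma mu_In (n : ℕ) : μ (In n) = (2 : ℝ≥0∞)⁻¹ ^ n := by
  induction n with
  | zero =>
    have : In 0 = Set.univ := by
      ext x
      simp [mem_In_iff]
    rw [this, pow_zero]
    exact measure_univ
  | succ n ih =>
    have hsplit : In n = In (n + 1) ∪ (fun x : G => e n + x) ⁻¹' In (n + 1) := by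
      ext x
      simp only [Set.mem_union, Set.mem_preimage, mem_In_iff]
      constructor
      · intro hx
        rcases zmod2_cases (x n) with h0 | h0
        · left
          intro k hk
          rcases Nat.lt_succ_iff_lt_or_eq.1 hk with h | h
          · exact hx k h
          · rw [h]; exact h0
        · right
          intro k hk
          rcases Nat.lt_succ_iff_lt_or_eq.1 hk with h | h
          · have : e n k = 0 := by simp [e, Nat.ne_of_lt h]
            rw [Pi.add_apply, this, zero_add]
            exact hx k h
          · subst h
            rw [Pi.add_apply, h0]
            simp [e]
      · rintro (hx | hx) k hk
        · exact hx k (Nat.lt_succ_of_lt hk)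
        · have := hx k (Nat.lt_succ_of_lt hk)
          rw [Pi.add_apply] at this
          have he : e n k = 0 := by simp [e, Nat.ne_of_lt hk]
          rwa [he, zero_add] at this
    have hdisj : Disjoint (In (n + 1)) ((fun x : G => e n + x) ⁻¹' In (n + 1)) := by
      rw [Set.disjoint_left]
      intro x hx hx'
      have h1 : x n = 0 := (mem_In_iff _ _).1 hx n (Nat.lt_succ_self n)
      have h2 : e n n + x n = 0 := (mem_In_iff _ _).1 hx' n (Nat.lt_succ_self n)
      rw [h1, add_zero] at h2
      simp [e] at h2
    have hmeas : MeasurableSet ((fun x : G => e n + x) ⁻¹' In (n + 1)) :=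
      (measurableSet_In (n + 1)).preimage (measurable_const_add (e n))
    have hpre : μ ((fun x : G => e n + x) ⁻¹' In (n + 1)) = μ (In (n + 1)) :=
      measure_preimage_add μ (e n) (In (n + 1))
    have key : μ (In n) = 2 * μ (In (n + 1)) := by
      rw [hsplit, measure_union hdisj hmeas, hpre, two_mul]
    have h2 : (2 : ℝ≥0∞) * μ (In (n + 1)) = 2⁻¹ ^ n := by rw [← key, ih]
    calc μ (In (n + 1)) = 2⁻¹ * (2 * μ (In (n + 1))) := by
          rw [← mul_assoc, ENNReal.inv_mul_cancel (by norm_num) (by norm_num), one_mul]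
      _ = 2⁻¹ ^ (n + 1) := by rw [h2, pow_succ, mul_comm]

open Classical in
lemma abs_fm (m : ℕ) (x : G) :
    |fm m x| = if x ∈ In (2 * m) then ((2 : ℝ) ^ (2 * m)) else 0 := by
  rw [fm, DW_two_pow, DW_two_pow]
  by_cases hall : ∀ j < 2 * m, x j = 0
  · have hx : x ∈ In (2 * m) := (mem_In_iff _ _).2 hall
    rcases zmod2_cases (x (2 * m)) with h0 | h0
    · have hall' : ∀ j < 2 * m + 1, x j = 0 := by
        intro j hj
        rcases Nat.lt_succ_iff_lt_or_eq.1 hj with h | h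
        · exact hall j h
        · rw [h]; exact h0
      rw [if_pos hall', if_pos hall, if_pos hx, pow_succ]
      have hr : (2 : ℝ) ^ (2 * m) * 2 - 2 ^ (2 * m) = 2 ^ (2 * m) := by ring
      rw [hr, abs_of_nonneg (by positivity)]
    · have hall' : ¬∀ j < 2 * m + 1, x j = 0 := by
        intro hc
        have := hc (2 * m) (Nat.lt_succ_self _)
        rw [h0] at this
        exact one_ne_zero this
      rw [if_neg hall', if_pos hall, if_pos hx, zero_sub, abs_neg,
        abs_of_nonneg (by positivity)]
  · have hx : x ∉ In (2 * m) := fun hc => hall ((mem_In_iff _ _).1 hc)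
    have hall' : ¬∀ j < 2 * m + 1, x j = 0 :=
      fun hc => hall fun j hj => hc j (Nat.lt_succ_of_lt hj)
    rw [if_neg hall', if_neg hall, if_neg hx, sub_zero, abs_zero]

lemma fstar_fm (m : ℕ) (x : G) : fstar (fm m) x = ENNReal.ofReal |fm m x| := by
  rw [fstar]
  apply le_antisymm
  · refine iSup_le fun n => ?_
    rcases le_or_gt n (2 * m) with h | h
    · rw [SW_fm_low m n h]
      simp
    · rw [SW_fm_high m n h]
  · calc ENNReal.ofReal |fm m x|
        = ENNReal.ofReal |SW (fm m) (2 ^ (2 * m + 1)) x| := by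
          rw [SW_fm_high m (2 * m + 1) le_rfl]
      _ ≤ ⨆ n : ℕ, ENNReal.ofReal |SW (fm m) (2 ^ n) x| :=
          le_iSup (fun n => ENNReal.ofReal |SW (fm m) (2 ^ n) x|) (2 * m + 1)

/-- The maximal function of `f_m` equals `|f_m|` pointwise and
`‖f_m*‖_{L_p} = 2^{2m(1−1/p)}` for all `0 < p < ∞`. -/
theorem maximal_function_of_fm (m : ℕ) (hm : 1 ≤ m) :
    (∀ x : G, fstar (fm m) x = ENNReal.ofReal |fm m x|) ∧
    (∀ p : ℝ, 0 < p →
      (∫⁻ x, fstar (fm m) x ^ p ∂μ) ^ (1 / p) =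
        ENNReal.ofReal ((2 : ℝ) ^ ((2 * m : ℝ) * (1 - 1 / p)))) := by
  refine ⟨fstar_fm m, fun p hp => ?_⟩
  have hmem := measurableSet_In (2 * m)
  have hpoint : ∀ x : G, fstar (fm m) x ^ p
      = Set.indicator (In (2 * m)) (fun _ => ENNReal.ofReal ((2 : ℝ) ^ (2 * m)) ^ p) x := by
    intro x
    rw [fstar_fm, abs_fm]
    by_cases hx : x ∈ In (2 * m)
    · rw [if_pos hx, Set.indicator_of_mem hx]
    · rw [if_neg hx, Set.indicator_of_notMem hx, ENNReal.ofReal_zero,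
        ENNReal.zero_rpow_of_pos hp]
  rw [lintegral_congr hpoint, lintegral_indicator_const hmem, mu_In]
  have ha : (0 : ℝ) < 2 ^ (2 * m) := by positivity
  have h1 : ENNReal.ofReal ((2 : ℝ) ^ (2 * m)) ^ p
      = ENNReal.ofReal (((2 : ℝ) ^ (2 * m)) ^ p) := ENNReal.ofReal_rpow_of_pos ha
  have h2 : ((2 : ℝ≥0∞))⁻¹ ^ (2 * m) = ENNReal.ofReal (((2 : ℝ))⁻¹ ^ (2 * m)) := by
    rw [ENNReal.ofReal_pow (by norm_num), ENNReal.ofReal_inv_of_pos (by norm_num)]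
    norm_num
  rw [h1, h2, ← ENNReal.ofReal_mul (by positivity),
    ENNReal.ofReal_rpow_of_pos (by positivity)]
  congr 1
  have t0 : ((2 : ℝ) ^ (2 * m) : ℝ) = (2 : ℝ) ^ (((2 * m : ℕ) : ℝ)) :=
    (Real.rpow_natCast 2 (2 * m)).symm
  have t1 : ((2 : ℝ)⁻¹) ^ (2 * m) = (2 : ℝ) ^ (-(((2 * m : ℕ)) : ℝ)) := by
    rw [inv_pow, ← Real.rpow_natCast 2 (2 * m), ← Real.rpow_neg (by norm_num)]
  rw [t0, t1, ← Real.rpow_mul (by norm_num : (0:ℝ) ≤ 2),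
    ← Real.rpow_add (by norm_num : (0:ℝ) < 2),
    ← Real.rpow_mul (by norm_num : (0:ℝ) ≤ 2)]
  congr 1
  push_cast
  field_simp
  ring
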